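/- Let P(t) be the solution on [0,T] of the matrix Riccati equation dP/dt − P²/λ + Q + Q̄ = 0 with P(T) = Q_T + Q̄_T, and let Σ(t) solve dΣ/dt − (1/λ)(ΣP + PΣ) − (1/λ)Σ² + S*Q̄S − (Q̄S + S*Q̄) = 0 with Σ(T) = S_T*Q̄_T S_T − (Q̄_T S_T + S_T*Q̄_T). Then the function V(X,t) = (1/2) E[X* P(t) X] + (1/2) (E X)* Σ(t) (E X) on H×[0,T] satisfies the Bellman equation ∂V/∂t − (1/(2λ))||D_X V||² + (1/2) E[X*(Q+Q̄)X] + (1/2) (E X)*(S*Q̄S − Q̄S − S*Q̄)(E X) = 0 with terminal condition V(X,T) = (1/2) E[X*(Q_T+Q̄_T)X] + (1/2)(E X)*(S_T*Q̄_T S_T − Q̄_T S_T − S_T*Q̄_T)(E X), and its gradient is D_X V(X,t) = P(t)X + Σ(t) E X. -/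

import Mathlib

open MeasureTheory Set ContinuousLinearMap
open scoped RealInnerProductSpace

variable {Ω : Type*} [MeasurableSpace Ω] {n : ℕ}

/-- The expectation `E X ∈ ℝⁿ` of a square-integrable random variable `X ∈ L²(Ω;ℝⁿ)`. -/
noncomputable def expVal (μ : Measure Ω) [IsProbabilityMeasure μ]
    (X : Lp (EuclideanSpace ℝ (Fin n)) 2 μ) : EuclideanSpace ℝ (Fin n) :=
  ∫ ω, X ω ∂μ

/-- The quadratic functional `V(X,t) = (1/2) E[X* P(t) X] + (1/2) (E X)* Σ(t) (E X)`. -/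
noncomputable def Vq (μ : Measure Ω) [IsProbabilityMeasure μ]
    (P Sg : ℝ → EuclideanSpace ℝ (Fin n) →L[ℝ] EuclideanSpace ℝ (Fin n))
    (X : Lp (EuclideanSpace ℝ (Fin n)) 2 μ) (t : ℝ) : ℝ :=
  1 / 2 * (∫ ω, ⟪X ω, P t (X ω)⟫ ∂μ) + 1 / 2 * ⟪expVal μ X, Sg t (expVal μ X)⟫

/-- The random variable `P(t) X + Σ(t) (E X) ∈ L²(Ω;ℝⁿ)` (the gradient of `Vq`). -/
noncomputable def gradQ (μ : Measure Ω) [IsProbabilityMeasure μ]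
    (P Sg : ℝ → EuclideanSpace ℝ (Fin n) →L[ℝ] EuclideanSpace ℝ (Fin n))
    (X : Lp (EuclideanSpace ℝ (Fin n)) 2 μ) (t : ℝ) :
    Lp (EuclideanSpace ℝ (Fin n)) 2 μ :=
  (P t).compLp X + Lp.const 2 μ (Sg t (expVal μ X))

/-!
Both Riccati equations propagate self-adjointness backwards from `T`: the defect `P* - P`
(resp. `Σ* - Σ`) solves a linear equation `f' = A f + f B` and vanishes at `T`, hence vanishes
by Grönwall.

For operators `p, s` on `ℝⁿ` let `𝒫_{p,s} X = p X + s (E X)` on `L²`. Since `E` is the adjoint of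
the embedding of constants, `𝒫_{p,s}` is self-adjoint when `p` and `s` are, and `E ∘ const = id`
gives `𝒫_{p,s} 𝒫_{p',s'} = 𝒫_{p p', p s' + s p' + s s'}`. Thus `V(·,t) = ½ ⟪X, 𝒫_{P,Σ} X⟫` has
gradient `𝒫_{P,Σ} X`, and the two Riccati equations combine into the single operator equation
`𝒫' = 𝒫² / λ - 𝒫_{Q+Q̄, S*Q̄S - Q̄S - S*Q̄}`; pairing with `X` and `⟪X, 𝒫² X⟫ = ‖𝒫 X‖²` gives the
Bellman equation.
-/

section LinearODE

variable {R : Type*} [NormedRing R] [NormedSpace ℝ R] {a b : ℝ} {A B : ℝ → R}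

theorem eqOn_zero_of_hasDerivWithinAt_mul_add_mul {f : ℝ → R}
    (hA : ContinuousOn A (Icc a b)) (hB : ContinuousOn B (Icc a b))
    (hf : ∀ t ∈ Icc a b, HasDerivWithinAt f (A t * f t + f t * B t) (Icc a b) t)
    (hb : f b = 0) : EqOn f 0 (Icc a b) := by
  obtain ⟨CA, hCA⟩ := isCompact_Icc.exists_bound_of_continuousOn hA
  obtain ⟨CB, hCB⟩ := isCompact_Icc.exists_bound_of_continuousOn hB
  have hlip : ∀ t ∈ Ioc a b,
      LipschitzOnWith (CA + CB).toNNReal (fun x => A t * x + x * B t) univ := by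
    refine fun t ht => LipschitzOnWith.of_dist_le_mul fun x _ y _ => ?_
    have ht' : t ∈ Icc a b := Ioc_subset_Icc_self ht
    rw [dist_eq_norm, dist_eq_norm, show A t * x + x * B t - (A t * y + y * B t) =
      A t * (x - y) + (x - y) * B t by noncomm_ring]
    calc ‖A t * (x - y) + (x - y) * B t‖ ≤ ‖A t‖ * ‖x - y‖ + ‖x - y‖ * ‖B t‖ :=
          (norm_add_le _ _).trans (add_le_add (norm_mul_le _ _) (norm_mul_le _ _))
      _ ≤ (CA + CB) * ‖x - y‖ := by nlinarith [hCA t ht', hCB t ht', norm_nonneg (x - y)]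
      _ ≤ (CA + CB).toNNReal * ‖x - y‖ := by gcongr; exact Real.le_coe_toNNReal _
  refine ODE_solution_unique_of_mem_Icc_left hlip
    (fun t ht => (hf t ht).continuousWithinAt)
    (fun t ht => (hf t (Ioc_subset_Icc_self ht)).mono_of_mem_nhdsWithin
      (Icc_mem_nhdsLE_of_mem ht)) (fun _ _ => mem_univ _) continuousOn_const
    (fun t _ => by
      simpa only [Pi.zero_apply, mul_zero, zero_mul, add_zero] using
        hasDerivWithinAt_zero (F := R) t _)
    (fun _ _ => mem_univ _) hb

variable [StarRing R] [ContinuousStar R] [StarModule ℝ R]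

theorem isSelfAdjoint_of_hasDerivWithinAt {x x' : ℝ → R}
    (hA : ContinuousOn A (Icc a b)) (hB : ContinuousOn B (Icc a b))
    (hx : ∀ t ∈ Icc a b, HasDerivWithinAt x (x' t) (Icc a b) t)
    (hx' : ∀ t ∈ Icc a b,
      star (x' t) - x' t = A t * (star (x t) - x t) + (star (x t) - x t) * B t)
    (hb : IsSelfAdjoint (x b)) : ∀ t ∈ Icc a b, IsSelfAdjoint (x t) := by
  have hzero := eqOn_zero_of_hasDerivWithinAt_mul_add_mul (f := fun t => star (x t) - x t) hA hB
    (fun t ht => hx' t ht ▸ (hx t ht).star.sub (hx t ht)) (sub_eq_zero.2 hb)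
  exact fun t ht => sub_eq_zero.1 (hzero ht)

end LinearODE

section Riccati

variable {R : Type*} [NormedRing R] [NormedAlgebra ℝ R] [StarRing R] [ContinuousStar R]
  [StarModule ℝ R] {a b c : ℝ}

theorem isSelfAdjoint_of_riccati {q : R} {x : ℝ → R} (hq : IsSelfAdjoint q)
    (hx : ∀ t ∈ Icc a b, HasDerivWithinAt x (c • (x t * x t) - q) (Icc a b) t)
    (hb : IsSelfAdjoint (x b)) : ∀ t ∈ Icc a b, IsSelfAdjoint (x t) := by
  have hxc : ContinuousOn x (Icc a b) := fun t ht => (hx t ht).continuousWithinAt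
  refine isSelfAdjoint_of_hasDerivWithinAt (A := fun t => c • star (x t)) (B := fun t => c • x t)
    (hxc.star.const_smul c) (hxc.const_smul c) hx (fun t _ => ?_) hb
  simp only [star_sub, star_smul, star_mul, hq.star_eq, star_trivial, mul_sub, sub_mul,
    smul_mul_assoc, mul_smul_comm]
  module

theorem isSelfAdjoint_of_riccati_coupled {r r' : R} {p s : ℝ → R}
    (hp : ∀ t ∈ Icc a b, IsSelfAdjoint (p t)) (hpc : ContinuousOn p (Icc a b))
    (hr : IsSelfAdjoint r) (hr' : IsSelfAdjoint r')
    (hs : ∀ t ∈ Icc a b, HasDerivWithinAt s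
      (c • (s t * p t + p t * s t) + c • (s t * s t) - r + r') (Icc a b) t)
    (hb : IsSelfAdjoint (s b)) : ∀ t ∈ Icc a b, IsSelfAdjoint (s t) := by
  have hsc : ContinuousOn s (Icc a b) := fun t ht => (hs t ht).continuousWithinAt
  refine isSelfAdjoint_of_hasDerivWithinAt (A := fun t => c • (p t + star (s t)))
    (B := fun t => c • (p t + s t)) ((hpc.add hsc.star).const_smul c)
    ((hpc.add hsc).const_smul c) hs (fun t ht => ?_) hb
  simp only [star_sub, star_add, star_smul, star_mul, (hp t ht).star_eq, hr.star_eq,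
    hr'.star_eq, star_trivial, mul_sub, sub_mul, mul_add, add_mul, smul_mul_assoc, mul_smul_comm]
  module

end Riccati

section SelfAdjoint

variable {F : Type*} [NormedAddCommGroup F] [InnerProductSpace ℝ F] [CompleteSpace F]
  {A : F →L[ℝ] F}

theorem IsSelfAdjoint.comp_add_adjoint_comp (hA : IsSelfAdjoint A) (B : F →L[ℝ] F) :
    IsSelfAdjoint (A ∘L B + adjoint B ∘L A) := by
  rw [isSelfAdjoint_iff', map_add, adjoint_comp, adjoint_comp, hA.adjoint_eq, adjoint_adjoint,
    add_comm]

theorem hasGradientAt_half_inner_self (hA : IsSelfAdjoint A) (x : F) :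
    HasGradientAt (fun y => 1 / 2 * ⟪y, A y⟫) (A x) x := by
  rw [hasGradientAt_iff_hasFDerivAt]
  refine ((hasFDerivAt_id x).inner ℝ A.hasFDerivAt).const_mul (1 / 2 : ℝ) |>.congr_fderiv ?_
  ext y
  have hsymm := hA.isSymmetric x y
  simp only [coe_coe] at hsymm
  simp only [one_div, id_eq, smul_apply, comp_apply, prod_apply, id_apply, fderivInnerCLM_apply,
    real_inner_comm (A x) y, hsymm, smul_eq_mul, InnerProductSpace.toDual_apply_apply]
  ring

theorem IsSelfAdjoint.inner_mul_apply_self (hA : IsSelfAdjoint A) (x : F) :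
    ⟪x, (A * A) x⟫ = ‖A x‖ ^ 2 := by
  rw [mul_apply_eq_comp, ← adjoint_inner_left, hA.adjoint_eq, real_inner_self_eq_norm_sq]

end SelfAdjoint

section CompLp

variable {μ : Measure Ω} {q : ENNReal} [Fact (1 ≤ q)]
  {E F G : Type*} [NormedAddCommGroup E] [NormedSpace ℝ E] [NormedAddCommGroup F]
  [NormedSpace ℝ F] [NormedAddCommGroup G] [NormedSpace ℝ G]

theorem compLpL_comp (g : F →L[ℝ] G) (f : E →L[ℝ] F) :
    (g ∘L f).compLpL q μ = g.compLpL q μ ∘L f.compLpL q μ := by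
  ext1 X
  refine Lp.ext ?_
  filter_upwards [(g ∘L f).coeFn_compLpL X, g.coeFn_compLpL (f.compLpL q μ X),
    f.coeFn_compLpL X] with ω hgf hg hf
  simp_all

theorem compLpL_constL [IsFiniteMeasure μ] (f : E →L[ℝ] F) (c : E) :
    f.compLpL q μ (Lp.constL q μ ℝ c) = Lp.constL q μ ℝ (f c) := by
  refine Lp.ext ?_
  filter_upwards [f.coeFn_compLpL (Lp.constL q μ ℝ c), Lp.coeFn_const q μ c,
    Lp.coeFn_const q μ (f c)] with ω hf hc hfc
  simp_all

theorem HasDerivWithinAt.compLpL_apply {f : ℝ → E →L[ℝ] F} {f' : E →L[ℝ] F}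
    {I : Set ℝ} {t : ℝ} (hf : HasDerivWithinAt f f' I t) (X : Lp E q μ) :
    HasDerivWithinAt (fun τ => (f τ).compLpL q μ X) (f'.compLpL q μ X) I t :=
  ((compLpL₂ q μ (ContinuousLinearMap.id ℝ (E →L[ℝ] F))).flip X).hasFDerivAt.comp_hasDerivWithinAt
    t hf

end CompLp

theorem IsSelfAdjoint.compLpL {μ : Measure Ω} {E : Type*} [NormedAddCommGroup E]
    [InnerProductSpace ℝ E] [CompleteSpace E] {p : E →L[ℝ] E} (hp : IsSelfAdjoint p) :
    IsSelfAdjoint (p.compLpL 2 μ) := by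
  refine isSelfAdjoint_iff_isSymmetric.2 fun X Y => ?_
  simp only [coe_coe, L2.inner_def]
  refine integral_congr_ae ?_
  filter_upwards [p.coeFn_compLpL X, p.coeFn_compLpL Y] with ω hX hY
  rw [hX, hY]
  exact hp.isSymmetric _ _

section MeanField

variable (μ : Measure Ω) {E : Type*} [NormedAddCommGroup E] [InnerProductSpace ℝ E]
  [CompleteSpace E]

/-- The expectation on `L²`, defined as the adjoint of the embedding of constants so that
`⟪const c, Y⟫ = ⟪c, E Y⟫` holds by construction (see `expectationL2_apply`). -/
noncomputable def expectationL2 [IsFiniteMeasure μ] : Lp E 2 μ →L[ℝ] E :=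
  adjoint (Lp.constL 2 μ ℝ)

/-- `(p, s) ↦ (X ↦ p X + s (E X))`, linear in the pair `(p, s)`. -/
noncomputable def meanFieldOp [IsFiniteMeasure μ] :
    (E →L[ℝ] E) × (E →L[ℝ] E) →L[ℝ] (Lp E 2 μ →L[ℝ] Lp E 2 μ) :=
  compLpL₂ 2 μ (ContinuousLinearMap.id ℝ (E →L[ℝ] E)) ∘L fst ℝ _ _ +
    (postcomp _ (adjoint (expectationL2 μ)) ∘L precomp _ (expectationL2 μ)) ∘L snd ℝ _ _

variable {μ}

section FiniteMeasure

variable [IsFiniteMeasure μ]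

theorem inner_constL_left (c : E) (Y : Lp E 2 μ) :
    ⟪Lp.constL 2 μ ℝ c, Y⟫ = ⟪c, ∫ ω, Y ω ∂μ⟫ := by
  rw [L2.inner_def, ← integral_inner ((Lp.memLp Y).integrable one_le_two)]
  refine integral_congr_ae ?_
  filter_upwards [Lp.coeFn_const 2 μ c] with ω hω
  simp only [Lp.constL_apply]
  rw [hω]
  rfl

theorem expectationL2_apply (Y : Lp E 2 μ) : expectationL2 μ Y = ∫ ω, Y ω ∂μ :=
  ext_inner_left ℝ fun c => by rw [expectationL2, adjoint_inner_right, inner_constL_left]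

theorem adjoint_expectationL2 : adjoint (expectationL2 μ) = Lp.constL 2 μ ℝ (E := E) :=
  adjoint_adjoint _

theorem expectationL2_compLpL (p : E →L[ℝ] E) (Y : Lp E 2 μ) :
    expectationL2 μ (p.compLpL 2 μ Y) = p (expectationL2 μ Y) := by
  rw [expectationL2_apply, expectationL2_apply, integral_congr_ae (p.coeFn_compLpL Y),
    p.integral_comp_comm ((Lp.memLp Y).integrable one_le_two)]

theorem meanFieldOp_apply (p s : E →L[ℝ] E) :
    meanFieldOp μ (p, s) = p.compLpL 2 μ + adjoint (expectationL2 μ) ∘L s ∘L expectationL2 μ :=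
  rfl

theorem meanFieldOp_apply_apply (p s : E →L[ℝ] E) (X : Lp E 2 μ) :
    meanFieldOp μ (p, s) X = p.compLp X + Lp.const 2 μ (s (∫ ω, X ω ∂μ)) := by
  rw [meanFieldOp_apply, add_apply, comp_apply, comp_apply, adjoint_expectationL2,
    expectationL2_apply]
  rfl

theorem inner_meanFieldOp_apply_self (p s : E →L[ℝ] E) (X : Lp E 2 μ) :
    ⟪X, meanFieldOp μ (p, s) X⟫ =
      ∫ ω, ⟪X ω, p (X ω)⟫ ∂μ + ⟪∫ ω, X ω ∂μ, s (∫ ω, X ω ∂μ)⟫ := by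
  rw [meanFieldOp_apply, add_apply, inner_add_right, comp_apply, adjoint_inner_right,
    comp_apply, expectationL2_apply, L2.inner_def]
  congr 1
  refine integral_congr_ae ?_
  filter_upwards [p.coeFn_compLpL X] with ω hω
  rw [hω]

theorem IsSelfAdjoint.meanFieldOp {p s : E →L[ℝ] E} (hp : IsSelfAdjoint p)
    (hs : IsSelfAdjoint s) : IsSelfAdjoint (meanFieldOp μ (p, s)) :=
  hp.compLpL.add (hs.adjoint_conj _)

theorem HasDerivWithinAt.meanFieldOp_apply {p s : ℝ → E →L[ℝ] E} {p' s' : E →L[ℝ] E}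
    {I : Set ℝ} {t : ℝ} (hp : HasDerivWithinAt p p' I t) (hs : HasDerivWithinAt s s' I t)
    (X : Lp E 2 μ) :
    HasDerivWithinAt (fun τ => meanFieldOp μ (p τ, s τ) X) (meanFieldOp μ (p', s') X) I t :=
  (hp.compLpL_apply X).add <|
    ((adjoint (expectationL2 μ)).comp (apply ℝ E (expectationL2 μ X))).hasFDerivAt
      |>.comp_hasDerivWithinAt t hs

end FiniteMeasure

variable [IsProbabilityMeasure μ]

theorem expectationL2_constL (c : E) : expectationL2 μ (Lp.constL 2 μ ℝ c) = c := by
  rw [expectationL2_apply, Lp.constL_apply, integral_congr_ae (Lp.coeFn_const 2 μ c)]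
  simp

theorem meanFieldOp_mul (p s p' s' : E →L[ℝ] E) :
    meanFieldOp μ (p, s) * meanFieldOp μ (p', s') =
      meanFieldOp μ (p * p', p * s' + s * p' + s * s') := by
  ext1 X
  simp only [mul_def, meanFieldOp_apply, add_apply, comp_apply, adjoint_expectationL2,
    map_add, expectationL2_constL, expectationL2_compLpL, compLpL_constL, compLpL_comp]
  abel

theorem hasDerivWithinAt_half_inner_meanFieldOp {lam : ℝ} {q r r' : E →L[ℝ] E}
    {p s : ℝ → E →L[ℝ] E} {I : Set ℝ} {t : ℝ}
    (hp : HasDerivWithinAt p ((1 / lam) • (p t * p t) - q) I t)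
    (hs : HasDerivWithinAt s
      ((1 / lam) • (s t * p t + p t * s t) + (1 / lam) • (s t * s t) - r + r') I t)
    (hpt : IsSelfAdjoint (p t)) (hst : IsSelfAdjoint (s t)) (X : Lp E 2 μ) :
    HasDerivWithinAt (fun τ => 1 / 2 * ⟪X, meanFieldOp μ (p τ, s τ) X⟫)
      (1 / (2 * lam) * ‖meanFieldOp μ (p t, s t) X‖ ^ 2 -
        (1 / 2 * ∫ ω, ⟪X ω, q (X ω)⟫ ∂μ +
          1 / 2 * ⟪∫ ω, X ω ∂μ, (r - r') (∫ ω, X ω ∂μ)⟫)) I t := by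
  have hriccati : meanFieldOp μ ((1 / lam) • (p t * p t) - q,
      (1 / lam) • (s t * p t + p t * s t) + (1 / lam) • (s t * s t) - r + r') =
      (1 / lam) • (meanFieldOp μ (p t, s t) * meanFieldOp μ (p t, s t)) -
        meanFieldOp μ (q, r - r') := by
    rw [meanFieldOp_mul, ← map_smul, ← map_sub]
    congr 1
    ext1
    · rfl
    · simp only [Prod.snd_sub, Prod.smul_snd]
      module
  refine (((innerSL ℝ X).hasFDerivAt.comp_hasDerivWithinAt t
    (hp.meanFieldOp_apply hs X)).const_mul (1 / 2)).congr_deriv ?_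
  rw [innerSL_apply_apply, hriccati, sub_apply, smul_apply, inner_sub_right,
    real_inner_smul_right, (hpt.meanFieldOp hst).inner_mul_apply_self,
    inner_meanFieldOp_apply_self]
  ring

end MeanField

theorem statement18_general (μ : Measure Ω) [IsProbabilityMeasure μ]
    (Q Qb QT QbT S ST : EuclideanSpace ℝ (Fin n) →L[ℝ] EuclideanSpace ℝ (Fin n))
    (hQ : IsSelfAdjoint Q) (hQb : IsSelfAdjoint Qb)
    (hQT : IsSelfAdjoint QT) (hQbT : IsSelfAdjoint QbT)
    (T lam : ℝ)
    (P Sg : ℝ → EuclideanSpace ℝ (Fin n) →L[ℝ] EuclideanSpace ℝ (Fin n))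
    (hP : ∀ τ ∈ Icc (0 : ℝ) T, HasDerivWithinAt P
      ((1 / lam) • (P τ ∘L P τ) - (Q + Qb)) (Icc 0 T) τ)
    (hPT : P T = QT + QbT)
    (hSg : ∀ τ ∈ Icc (0 : ℝ) T, HasDerivWithinAt Sg
      ((1 / lam) • (Sg τ ∘L P τ + P τ ∘L Sg τ) + (1 / lam) • (Sg τ ∘L Sg τ)
        - adjoint S ∘L Qb ∘L S + (Qb ∘L S + adjoint S ∘L Qb)) (Icc 0 T) τ)
    (hSgT : Sg T = adjoint ST ∘L QbT ∘L ST - (QbT ∘L ST + adjoint ST ∘L QbT)) :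
    ∀ X : Lp (EuclideanSpace ℝ (Fin n)) 2 μ, ∀ t ∈ Icc (0 : ℝ) T,
      HasGradientAt (fun X' => Vq μ P Sg X' t) (gradQ μ P Sg X t) X ∧
      HasDerivWithinAt (fun τ => Vq μ P Sg X τ)
        (1 / (2 * lam) * ‖gradQ μ P Sg X t‖ ^ 2 -
          (1 / 2 * (∫ ω, ⟪X ω, (Q + Qb) (X ω)⟫ ∂μ) +
            1 / 2 * ⟪expVal μ X,
              (adjoint S ∘L Qb ∘L S - Qb ∘L S - adjoint S ∘L Qb) (expVal μ X)⟫))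
        (Icc 0 T) t ∧
      Vq μ P Sg X T =
        1 / 2 * (∫ ω, ⟪X ω, (QT + QbT) (X ω)⟫ ∂μ) +
          1 / 2 * ⟪expVal μ X,
            (adjoint ST ∘L QbT ∘L ST - QbT ∘L ST - adjoint ST ∘L QbT) (expVal μ X)⟫ := by
  have hPsa : ∀ τ ∈ Icc (0 : ℝ) T, IsSelfAdjoint (P τ) :=
    isSelfAdjoint_of_riccati (hQ.add hQb) hP (by rw [hPT]; exact hQT.add hQbT)
  have hSgsa : ∀ τ ∈ Icc (0 : ℝ) T, IsSelfAdjoint (Sg τ) :=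
    isSelfAdjoint_of_riccati_coupled hPsa (fun τ hτ => (hP τ hτ).continuousWithinAt)
      (hQb.adjoint_conj S) (hQb.comp_add_adjoint_comp S) hSg
      (by rw [hSgT]; exact (hQbT.adjoint_conj ST).sub (hQbT.comp_add_adjoint_comp ST))
  have hV : ∀ X τ, Vq μ P Sg X τ = 1 / 2 * ⟪X, meanFieldOp μ (P τ, Sg τ) X⟫ := fun X τ => by
    rw [inner_meanFieldOp_apply_self, mul_add]
    rfl
  have hgrad : ∀ X t, gradQ μ P Sg X t = meanFieldOp μ (P t, Sg t) X :=
    fun X t => (meanFieldOp_apply_apply _ _ X).symm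
  intro X t ht
  refine ⟨?_, ?_, by rw [Vq, hPT, hSgT, sub_add_eq_sub_sub]⟩
  · simp only [hV, hgrad]
    exact hasGradientAt_half_inner_self ((hPsa t ht).meanFieldOp (hSgsa t ht)) X
  · simp only [hV, hgrad]
    rw [sub_sub]
    exact hasDerivWithinAt_half_inner_meanFieldOp (hP t ht) (hSg t ht) (hPsa t ht) (hSgsa t ht) X

/-- in the quadratic case, the function
`V(X,t) = (1/2) E[X* P(t) X] + (1/2)(E X)* Σ(t)(E X)` built from the solutions of the two
Riccati equations solves the Bellman equation on `H × [0,T]` with the prescribed terminal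
condition, and its gradient is `D_X V(X,t) = P(t) X + Σ(t) E X`. -/
theorem statement18 (μ : Measure Ω) [IsProbabilityMeasure μ]
    (Q Qb QT QbT S ST : EuclideanSpace ℝ (Fin n) →L[ℝ] EuclideanSpace ℝ (Fin n))
    (hQ : IsSelfAdjoint Q) (hQb : IsSelfAdjoint Qb)
    (hQT : IsSelfAdjoint QT) (hQbT : IsSelfAdjoint QbT)
    (T lam : ℝ) (hT : 0 < T) (hlam : 0 < lam)
    (P Sg : ℝ → EuclideanSpace ℝ (Fin n) →L[ℝ] EuclideanSpace ℝ (Fin n))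
    (hP : ∀ τ ∈ Icc (0 : ℝ) T, HasDerivWithinAt P
      ((1 / lam) • (P τ ∘L P τ) - (Q + Qb)) (Icc 0 T) τ)
    (hPT : P T = QT + QbT)
    (hSg : ∀ τ ∈ Icc (0 : ℝ) T, HasDerivWithinAt Sg
      ((1 / lam) • (Sg τ ∘L P τ + P τ ∘L Sg τ) + (1 / lam) • (Sg τ ∘L Sg τ)
        - adjoint S ∘L Qb ∘L S + (Qb ∘L S + adjoint S ∘L Qb)) (Icc 0 T) τ)
    (hSgT : Sg T = adjoint ST ∘L QbT ∘L ST - (QbT ∘L ST + adjoint ST ∘L QbT)) :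
    ∀ X : Lp (EuclideanSpace ℝ (Fin n)) 2 μ, ∀ t ∈ Icc (0 : ℝ) T,
      HasGradientAt (fun X' => Vq μ P Sg X' t) (gradQ μ P Sg X t) X ∧
      HasDerivWithinAt (fun τ => Vq μ P Sg X τ)
        (1 / (2 * lam) * ‖gradQ μ P Sg X t‖ ^ 2 -
          (1 / 2 * (∫ ω, ⟪X ω, (Q + Qb) (X ω)⟫ ∂μ) +
            1 / 2 * ⟪expVal μ X,
              (adjoint S ∘L Qb ∘L S - Qb ∘L S - adjoint S ∘L Qb) (expVal μ X)⟫))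
        (Icc 0 T) t ∧
      Vq μ P Sg X T =
        1 / 2 * (∫ ω, ⟪X ω, (QT + QbT) (X ω)⟫ ∂μ) +
          1 / 2 * ⟪expVal μ X,
            (adjoint ST ∘L QbT ∘L ST - QbT ∘L ST - adjoint ST ∘L QbT) (expVal μ X)⟫ :=
  statement18_general μ Q Qb QT QbT S ST hQ hQb hQT hQbT T lam P Sg hP hPT hSg hSgT
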